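/- If {e'_i} is another orthonormal basis with e'_i = U e_i for a unitary U, then ω'_ρ = (UθU*θ ⊗ I) ω_ρ (UθU*θ ⊗ I)*, where ω_ρ, ω'_ρ are the states on h ⊗ h built from the two bases and θ is the conjugation w.r.t. {e_i}. -/

import Mathlib

/-!
Both states are the rank-one operators `|Ω⟩⟨Ω|` and `|Ω'⟩⟨Ω'|` for the vectors
`Ω = ∑ eᵢ ⊗ ρ^{1/2} eᵢ` and `Ω' = ∑ U eᵢ ⊗ ρ^{1/2} U eᵢ`; these series converge (unconditionally)
because `∑ ‖ρ^{1/2} fᵢ‖² = tr ρ` for every orthonormal basis `fᵢ`. Pairing with elementary tensors,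
`⟪a ⊗ b, Ω'⟫ = ⟪ρ^{1/2} b, UθU* a⟫ = ⟪a ⊗ b, V Ω⟫` for `V = UθU*θ ⊗ I`, using that `θ` fixes
each `eᵢ`. Hence `V Ω = Ω'` and `V |Ω⟩⟨Ω| V* = |V Ω⟩⟨V Ω| = |Ω'⟩⟨Ω'|`.
-/

open scoped InnerProductSpace
open Finset ContinuousLinearMap InnerProductSpace

section Summability

variable {𝕜 ι κ E : Type*} [NormedAddCommGroup E]

theorem Summable.exists_forall_norm_sum_le [CompleteSpace E] {g : κ → E} (hg : Summable g) :
    ∃ B, ∀ u : Finset κ, ‖∑ i ∈ u, g i‖ ≤ B := by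
  classical
  obtain ⟨s, hs⟩ := summable_iff_vanishing_norm.mp hg 1 one_pos
  refine ⟨∑ i ∈ s, ‖g i‖ + 1, fun u => ?_⟩
  rw [← sum_inter_add_sum_sdiff u s g]
  refine (norm_add_le _ _).trans (add_le_add ?_ (hs _ sdiff_disjoint).le)
  exact (norm_sum_le _ _).trans
    (sum_le_sum_of_subset_of_nonneg inter_subset_right fun _ _ _ => norm_nonneg _)

theorem Finset.sum_eq_sum_sum_preimage_mk [DecidableEq ι] {M : Type*} [AddCommMonoid M]
    (t : Finset (ι × κ)) (F : ι → κ → M) :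
    ∑ p ∈ t, F p.1 p.2 =
      ∑ j ∈ t.image Prod.fst, ∑ i ∈ t.preimage (Prod.mk j) (Prod.mk_right_injective j).injOn,
        F j i :=
  sum_finset_product' _ _ _ fun p => by simpa using fun hp => ⟨p.2, hp⟩

variable [NormedField 𝕜] [NormedSpace 𝕜 E] [CompleteSpace E]

-- `g` need not be absolutely summable: `∑ e i ⊗ ρ^{1/2} e i` converges only unconditionally.
theorem summable_prod_smul_of_summable_norm {f : ι → 𝕜} {g : κ → E}
    (hf : Summable fun j => ‖f j‖) (hg : Summable g) :
    Summable fun p : ι × κ => f p.1 • g p.2 := by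
  classical
  obtain ⟨B, hB⟩ := hg.exists_forall_norm_sum_le
  have hB0 : 0 ≤ B := (norm_nonneg _).trans (hB ∅)
  set F := ∑' j, ‖f j‖
  have hF0 : 0 ≤ F := tsum_nonneg fun _ => norm_nonneg _
  rw [summable_iff_vanishing_norm]
  intro ε hε
  set δ := ε / (2 * (F + 1))
  obtain ⟨s₁, hs₁⟩ := summable_iff_vanishing_norm.mp hf (ε / (2 * (B + 1))) (by positivity)
  obtain ⟨s₂, hs₂⟩ := summable_iff_vanishing_norm.mp hg δ (by positivity)
  refine ⟨s₁ ×ˢ s₂, fun t ht => ?_⟩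
  set J := t.image Prod.fst
  set fiber := fun j => t.preimage (Prod.mk j) (Prod.mk_right_injective j).injOn
  have hfiber : ∀ j ∈ s₁, ‖∑ i ∈ fiber j, g i‖ ≤ δ := fun j hj =>
    (hs₂ _ (disjoint_left.mpr fun i hit his => disjoint_left.mp ht (mem_preimage.mp hit)
      (mem_product.mpr ⟨hj, his⟩))).le
  have htail : ∑ j ∈ J \ s₁, ‖f j‖ ≤ ε / (2 * (B + 1)) := by
    simpa [abs_of_nonneg (sum_nonneg fun _ _ => norm_nonneg _)] using
      (hs₁ _ sdiff_disjoint).le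
  calc ‖∑ p ∈ t, f p.1 • g p.2‖
      = ‖∑ j ∈ J, f j • ∑ i ∈ fiber j, g i‖ := by
        simp_rw [smul_sum]; exact congrArg _ (t.sum_eq_sum_sum_preimage_mk fun j i => f j • g i)
    _ ≤ ∑ j ∈ J, ‖f j‖ * ‖∑ i ∈ fiber j, g i‖ :=
        (norm_sum_le _ _).trans_eq (by simp only [norm_smul])
    _ = ∑ j ∈ J ∩ s₁, ‖f j‖ * ‖∑ i ∈ fiber j, g i‖ +
          ∑ j ∈ J \ s₁, ‖f j‖ * ‖∑ i ∈ fiber j, g i‖ := (sum_inter_add_sum_sdiff _ _ _).symm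
    _ ≤ (∑ j ∈ J ∩ s₁, ‖f j‖) * δ + (∑ j ∈ J \ s₁, ‖f j‖) * B := by
        rw [sum_mul, sum_mul]
        exact add_le_add
          (sum_le_sum fun j hj => mul_le_mul_of_nonneg_left
            (hfiber j (mem_inter.mp hj).2) (norm_nonneg _))
          (sum_le_sum fun j _ => mul_le_mul_of_nonneg_left (hB _) (norm_nonneg _))
    _ ≤ F * δ + ε / (2 * (B + 1)) * B :=
        add_le_add
          (mul_le_mul_of_nonneg_right (hf.sum_le_tsum _ fun _ _ => norm_nonneg _) (by positivity))
          (mul_le_mul_of_nonneg_right htail hB0)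
    _ < ε := by
        have h₁ : F * δ < ε / 2 := by
          rw [mul_div, div_lt_div_iff₀ (by positivity) two_pos]; nlinarith
        have h₂ : ε / (2 * (B + 1)) * B < ε / 2 := by
          rw [div_mul_eq_mul_div, div_lt_div_iff₀ (by positivity) two_pos]; nlinarith
        linarith

theorem HasSum.smul_of_summable_norm {f : ι → 𝕜} {g : κ → E} {s : 𝕜} {t : E}
    (hf : HasSum f s) (hg : HasSum g t) (hf' : Summable fun j => ‖f j‖) :
    HasSum (fun p : ι × κ => f p.1 • g p.2) (s • t) :=
  hf.smul hg (summable_prod_smul_of_summable_norm hf' hg.summable)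

end Summability

section InnerProductSpace

variable {𝕜 ι κ E F : Type*} [RCLike 𝕜]

theorem summable_norm_mul_of_summable_norm_sq {a b : ι → 𝕜} (ha : Summable fun i => ‖a i‖ ^ 2)
    (hb : Summable fun i => ‖b i‖ ^ 2) : Summable fun i => ‖a i * b i‖ :=
  .of_nonneg_of_le (fun _ => norm_nonneg _)
    (fun i => by
      rw [norm_mul]; nlinarith [two_mul_le_add_sq ‖a i‖ ‖b i‖])
    ((ha.add hb).mul_left (1 / 2))

variable [NormedAddCommGroup E] [InnerProductSpace 𝕜 E]

theorem summable_of_orthogonal_of_summable_norm_sq [CompleteSpace E] {v : ι → E}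
    (hv : Pairwise fun i j => ⟪v i, v j⟫_𝕜 = 0) (h : Summable fun i => ‖v i‖ ^ 2) :
    Summable v := by
  have hV : OrthogonalFamily 𝕜 (fun i => 𝕜 ∙ v i) fun i => (𝕜 ∙ v i).subtypeₗᵢ := by
    intro i j hij x y
    obtain ⟨c, hc⟩ := Submodule.mem_span_singleton.mp x.2
    obtain ⟨d, hd⟩ := Submodule.mem_span_singleton.mp y.2
    simp [← hc, ← hd, inner_smul_left, inner_smul_right, hv hij]
  simpa using (hV.summable_iff_norm_sq_summable
    fun i => ⟨v i, Submodule.mem_span_singleton_self _⟩).mpr (by simpa using h)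

theorem HilbertBasis.hasSum_norm_inner_sq (e : HilbertBasis ι 𝕜 E) (x : E) :
    HasSum (fun i => ‖⟪e i, x⟫_𝕜‖ ^ 2) (‖x‖ ^ 2) := by
  simpa [e.repr_apply_apply, Real.rpow_two] using lp.hasSum_norm (p := 2) (by norm_num) (e.repr x)

theorem Orthonormal.summable_norm_inner_mul_inner {f : ι → E} (hf : Orthonormal 𝕜 f) (x y : E) :
    Summable fun i => ‖⟪f i, x⟫_𝕜 * ⟪f i, y⟫_𝕜‖ :=
  summable_norm_mul_of_summable_norm_sq (hf.inner_products_summable x)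
    (hf.inner_products_summable y)

namespace HilbertBasis

variable (e : HilbertBasis ι 𝕜 E) {θ : E → E}

theorem inner_apply_of_fixed (hθ : ∀ x y, ⟪θ x, θ y⟫_𝕜 = ⟪y, x⟫_𝕜) (hθe : ∀ i, θ (e i) = e i)
    (i : ι) (x : E) : ⟪e i, θ x⟫_𝕜 = ⟪x, e i⟫_𝕜 := by
  simpa only [hθe] using hθ (e i) x

theorem involutive_of_fixed (hθ : ∀ x y, ⟪θ x, θ y⟫_𝕜 = ⟪y, x⟫_𝕜) (hθe : ∀ i, θ (e i) = e i) :
    Function.Involutive θ := fun x =>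
  e.repr.injective <| lp.ext <| funext fun i => by
    rw [e.repr_apply_apply, e.repr_apply_apply, e.inner_apply_of_fixed hθ hθe, ← inner_conj_symm,
      e.inner_apply_of_fixed hθ hθe, inner_conj_symm]

theorem inner_apply_comm_of_fixed (hθ : ∀ x y, ⟪θ x, θ y⟫_𝕜 = ⟪y, x⟫_𝕜)
    (hθe : ∀ i, θ (e i) = e i) (x y : E) : ⟪x, θ y⟫_𝕜 = ⟪y, θ x⟫_𝕜 := by
  conv_lhs => rw [← e.involutive_of_fixed hθ hθe x]
  exact hθ _ _

end HilbertBasis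

variable [NormedAddCommGroup F] [InnerProductSpace 𝕜 F] [CompleteSpace E] [CompleteSpace F]

theorem Orthonormal.summable_norm_apply_sq (e : HilbertBasis ι 𝕜 F) {f : κ → E}
    (hf : Orthonormal 𝕜 f) {T : E →L[𝕜] F} (hT : Summable fun j => ‖adjoint T (e j)‖ ^ 2) :
    Summable fun k => ‖T (f k)‖ ^ 2 := by
  have hprod : Summable fun p : ι × κ => ‖⟪f p.2, adjoint T (e p.1)⟫_𝕜‖ ^ 2 :=
    (summable_prod_of_nonneg fun _ => by positivity).mpr
      ⟨fun j => hf.inner_products_summable (adjoint T (e j)),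
        hT.of_nonneg_of_le (fun _ => tsum_nonneg fun _ => by positivity)
          fun j => hf.tsum_inner_products_le (adjoint T (e j))⟩
  refine ((summable_prod_of_nonneg fun _ => by positivity).mp hprod.prod_symm).2.congr fun k => ?_
  simp_rw [adjoint_inner_right, norm_inner_symm]
  exact (e.hasSum_norm_inner_sq (T (f k))).tsum_eq

end InnerProductSpace

section TensorEmbedding

variable {𝕜 ι E F K : Type*} [RCLike 𝕜]
  [NormedAddCommGroup E] [InnerProductSpace 𝕜 E] [NormedAddCommGroup F] [InnerProductSpace 𝕜 F]
  [NormedAddCommGroup K] [InnerProductSpace 𝕜 K] {tp : E →ₗ[𝕜] F →ₗ[𝕜] K}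

theorem norm_tensor (htp : ∀ u v u' v', ⟪tp u v, tp u' v'⟫_𝕜 = ⟪u, u'⟫_𝕜 * ⟪v, v'⟫_𝕜)
    (u : E) (v : F) : ‖tp u v‖ = ‖u‖ * ‖v‖ := by
  have h := htp u v u v
  simp only [inner_self_eq_norm_sq_to_K] at h
  exact (sq_eq_sq₀ (norm_nonneg _) (by positivity)).mp (by rw [mul_pow]; exact_mod_cast h)

theorem summable_tensor_apply [CompleteSpace K]
    (htp : ∀ u v u' v', ⟪tp u v, tp u' v'⟫_𝕜 = ⟪u, u'⟫_𝕜 * ⟪v, v'⟫_𝕜) {f : ι → E}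
    (hf : Orthonormal 𝕜 f) {T : E →L[𝕜] F} (hT : Summable fun i => ‖T (f i)‖ ^ 2) :
    Summable fun i => tp (f i) (T (f i)) :=
  summable_of_orthogonal_of_summable_norm_sq (𝕜 := 𝕜)
    (fun i j hij => by
      classical
      dsimp only
      rw [htp, orthonormal_iff_ite.mp hf i j, if_neg hij, zero_mul])
    (hT.congr fun i => by rw [norm_tensor htp, hf.1 i, one_mul])

theorem eq_of_forall_inner_tensor [CompleteSpace K]
    (hdense :
      (Submodule.span 𝕜 (Set.range fun uv : E × F => tp uv.1 uv.2)).topologicalClosure = ⊤)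
    {x y : K} (h : ∀ u v, ⟪tp u v, x⟫_𝕜 = ⟪tp u v, y⟫_𝕜) : x = y := by
  have hflip : innerSLFlip 𝕜 x = innerSLFlip 𝕜 y :=
    ext_on (Submodule.dense_iff_topologicalClosure_eq_top.mpr hdense) <| by
      rintro _ ⟨⟨u, v⟩, rfl⟩
      exact h u v
  exact ext_inner_left 𝕜 fun z => congrArg (· z) hflip

theorem inner_tensor_eq_of_hasSum
    (htp : ∀ u v u' v', ⟪tp u v, tp u' v'⟫_𝕜 = ⟪u, u'⟫_𝕜 * ⟪v, v'⟫_𝕜)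
    (e : HilbertBasis ι 𝕜 E) {w : ι → E} {z : ι → F} {ψ : E → E} {χ : F → E}
    (hw : ∀ x i, ⟪x, w i⟫_𝕜 = ⟪e i, ψ x⟫_𝕜) (hz : ∀ y i, ⟪y, z i⟫_𝕜 = ⟪χ y, e i⟫_𝕜) {Λ : K}
    (hΛ : HasSum (fun i => tp (w i) (z i)) Λ) (u : E) (v : F) :
    ⟪tp u v, Λ⟫_𝕜 = ⟪χ v, ψ u⟫_𝕜 := by
  refine (hΛ.mapL (innerSL 𝕜 (tp u v))).unique ?_
  simpa [htp, hw, hz, mul_comm] using e.hasSum_inner_mul_inner (χ v) (ψ u)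

theorem eq_rankOne_of_apply_tensor [CompleteSpace E] [CompleteSpace F] [CompleteSpace K]
    (htp : ∀ u v u' v', ⟪tp u v, tp u' v'⟫_𝕜 = ⟪u, u'⟫_𝕜 * ⟪v, v'⟫_𝕜)
    (hdense :
      (Submodule.span 𝕜 (Set.range fun uv : E × F => tp uv.1 uv.2)).topologicalClosure = ⊤)
    {f : ι → E} (hf : Orthonormal 𝕜 f) (T : E →L[𝕜] F) {Λ : K}
    (hΛ : HasSum (fun i => tp (f i) (T (f i))) Λ) {W : K →L[𝕜] K}
    (hW : ∀ u v, W (tp u v) = ∑' ij : ι × ι,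
      (⟪f ij.2, u⟫_𝕜 * ⟪T (f ij.2), v⟫_𝕜) • tp (f ij.1) (T (f ij.1))) :
    W = rankOne 𝕜 Λ Λ := by
  refine ext_on (Submodule.dense_iff_topologicalClosure_eq_top.mpr hdense) ?_
  rintro _ ⟨⟨u, v⟩, rfl⟩
  have hcoef : HasSum (fun j => ⟪f j, u⟫_𝕜 * ⟪T (f j), v⟫_𝕜) ⟪Λ, tp u v⟫_𝕜 := by
    simpa [htp] using hΛ.mapL (innerSLFlip 𝕜 (tp u v))
  have habs : Summable fun j => ‖⟪f j, u⟫_𝕜 * ⟪T (f j), v⟫_𝕜‖ := by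
    simpa only [← adjoint_inner_right] using hf.summable_norm_inner_mul_inner u (adjoint T v)
  rw [hW, rankOne_apply]
  exact ((Equiv.prodComm ι ι).hasSum_iff.mpr (hcoef.smul_of_summable_norm hΛ habs)).tsum_eq

end TensorEmbedding

theorem omega_rho_change_of_basis_general
    {H : Type*} [NormedAddCommGroup H] [InnerProductSpace ℂ H] [CompleteSpace H]
    {K : Type*} [NormedAddCommGroup K] [InnerProductSpace ℂ K] [CompleteSpace K]
    (tp : H →ₗ[ℂ] H →ₗ[ℂ] K)
    (htp : ∀ u v u' v' : H, ⟪tp u v, tp u' v'⟫_ℂ = ⟪u, u'⟫_ℂ * ⟪v, v'⟫_ℂ)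
    (hdense : (Submodule.span ℂ
        (Set.range fun uv : H × H => tp uv.1 uv.2)).topologicalClosure = ⊤)
    {ι : Type*} (e : HilbertBasis ι ℂ H)
    (θ : H → H)
    (hinner : ∀ u v : H, ⟪θ u, θ v⟫_ℂ = ⟪v, u⟫_ℂ)
    (hθe : ∀ i : ι, θ (e i) = e i)
    (ρ sq : H →L[ℂ] H)
    (hρtr : HasSum (fun i : ι => ⟪e i, ρ (e i)⟫_ℂ) 1)
    (hsqpos : sq.IsPositive) (hsq : sq ∘L sq = ρ)
    (U : H ≃ₗᵢ[ℂ] H)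
    (Wω W'ω : K →L[ℂ] K)
    (hWω : ∀ u v : H, Wω (tp u v)
      = ∑' ij : ι × ι, (⟪e ij.2, u⟫_ℂ * ⟪sq (e ij.2), v⟫_ℂ) •
          tp (e ij.1) (sq (e ij.1)))
    (hW'ω : ∀ u v : H, W'ω (tp u v)
      = ∑' ij : ι × ι, (⟪U (e ij.2), u⟫_ℂ * ⟪sq (U (e ij.2)), v⟫_ℂ) •
          tp (U (e ij.1)) (sq (U (e ij.1))))
    (VK : K →L[ℂ] K)
    (hVK : ∀ u v : H, VK (tp u v) = tp (U (θ (U.symm (θ u)))) v) :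
    W'ω = VK ∘L Wω ∘L (ContinuousLinearMap.adjoint VK) := by
  have hsq_symm : ∀ x y, ⟪sq x, y⟫_ℂ = ⟪x, sq y⟫_ℂ := hsqpos.inner_left_eq_inner_right
  have hU : ∀ x y, ⟪x, U y⟫_ℂ = ⟪U.symm x, y⟫_ℂ := fun x y => by
    simpa using (U.symm.inner_map_eq_flip x y).symm
  have hUe : Orthonormal ℂ fun i => U (e i) := e.orthonormal.comp_linearIsometryEquiv U
  have hsum : Summable fun i => ‖sq (e i)‖ ^ 2 := by
    refine Complex.summable_ofReal.mp (hρtr.summable.congr fun i => ?_)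
    rw [← hsq, comp_apply, ← hsq_symm, inner_self_eq_norm_sq_to_K]
    push_cast; rfl
  have hsum' : Summable fun i => ‖sq (U (e i))‖ ^ 2 :=
    hUe.summable_norm_apply_sq e (by rwa [hsqpos.isSelfAdjoint.adjoint_eq])
  obtain ⟨Ω, hΩ⟩ := summable_tensor_apply htp e.orthonormal hsum
  obtain ⟨Ω', hΩ'⟩ := summable_tensor_apply htp hUe hsum'
  have hVKΩ : HasSum (fun i => tp (U (θ (U.symm (e i)))) (sq (e i))) (VK Ω) := by
    simpa only [hVK, hθe] using hΩ.mapL VK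
  have hVKΩ' : VK Ω = Ω' := eq_of_forall_inner_tensor hdense fun a b => by
    rw [inner_tensor_eq_of_hasSum htp e (ψ := fun x => U (θ (U.symm x))) (χ := sq)
        (fun x i => by rw [hU, hU, e.inner_apply_comm_of_fixed hinner hθe])
        (fun y i => (hsq_symm y (e i)).symm) hVKΩ,
      inner_tensor_eq_of_hasSum htp e (ψ := fun x => θ (U.symm x)) (χ := fun y => U.symm (sq y))
        (fun x i => by rw [hU, e.inner_apply_of_fixed hinner hθe])
        (fun y i => by rw [← hsq_symm, hU]) hΩ',
      hU]
  rw [eq_rankOne_of_apply_tensor htp hdense e.orthonormal sq hΩ hWω,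
    eq_rankOne_of_apply_tensor htp hdense hUe sq hΩ' hW'ω, rankOne_comp, comp_rankOne,
    adjoint_adjoint, hVKΩ']

/-- If `{e'_i}` is another orthonormal basis with `e'_i = U e_i` for a unitary `U`, then
`ω'_ρ = (UθU*θ ⊗ I) ω_ρ (UθU*θ ⊗ I)*`, where `ω_ρ`, `ω'_ρ` are the states on `h ⊗ h`
built from the two bases and `θ` is the conjugation w.r.t. `{e_i}` (so `U* = U⁻¹`). -/
theorem omega_rho_change_of_basis
    {H : Type*} [NormedAddCommGroup H] [InnerProductSpace ℂ H] [CompleteSpace H]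
    {K : Type*} [NormedAddCommGroup K] [InnerProductSpace ℂ K] [CompleteSpace K]
    (tp : H →ₗ[ℂ] H →ₗ[ℂ] K)
    (htp : ∀ u v u' v' : H, ⟪tp u v, tp u' v'⟫_ℂ = ⟪u, u'⟫_ℂ * ⟪v, v'⟫_ℂ)
    (hdense : (Submodule.span ℂ
        (Set.range fun uv : H × H => tp uv.1 uv.2)).topologicalClosure = ⊤)
    {ι : Type*} (e : HilbertBasis ι ℂ H)
    (θ : H → H)
    (hadd : ∀ u v : H, θ (u + v) = θ u + θ v)
    (hsmul : ∀ (c : ℂ) (u : H), θ (c • u) = (starRingEnd ℂ c) • θ u)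
    (hinner : ∀ u v : H, ⟪θ u, θ v⟫_ℂ = ⟪v, u⟫_ℂ)
    (hθe : ∀ i : ι, θ (e i) = e i)
    (ρ sq : H →L[ℂ] H) (hρ : ρ.IsPositive)
    (hρtr : HasSum (fun i : ι => ⟪e i, ρ (e i)⟫_ℂ) 1)
    (hsqpos : sq.IsPositive) (hsq : sq ∘L sq = ρ)
    (U : H ≃ₗᵢ[ℂ] H)
    (Wω W'ω : K →L[ℂ] K)
    (hWω : ∀ u v : H, Wω (tp u v)
      = ∑' ij : ι × ι, (⟪e ij.2, u⟫_ℂ * ⟪sq (e ij.2), v⟫_ℂ) •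
          tp (e ij.1) (sq (e ij.1)))
    (hW'ω : ∀ u v : H, W'ω (tp u v)
      = ∑' ij : ι × ι, (⟪U (e ij.2), u⟫_ℂ * ⟪sq (U (e ij.2)), v⟫_ℂ) •
          tp (U (e ij.1)) (sq (U (e ij.1))))
    (VK : K →L[ℂ] K)
    (hVK : ∀ u v : H, VK (tp u v) = tp (U (θ (U.symm (θ u)))) v) :
    W'ω = VK ∘L Wω ∘L (ContinuousLinearMap.adjoint VK) :=
  omega_rho_change_of_basis_general tp htp hdense e θ hinner hθe ρ sq hρtr hsqpos hsq U Wω W'ω hWω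
    hW'ω VK hVK
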